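/- Let k ≥ 3 and let G be the k-sun graph. Then the Wiener polarity index of G equals k(k − 3)/2; that is, the number of unordered pairs {u,v} of vertices of G with d_G(u,v) = 3 equals k(k − 3)/2. -/

import Mathlib

/-- The `k`-sun graph on vertex type `Fin k ⊕ Fin k`: `Sum.inl j` is the clique
vertex `c_j`, `Sum.inr i` is the independent-set vertex `s_i`, which is adjacent
exactly to `c_i` and `c_{i+1}` (indices modulo `k`). -/
def sunGraph (k : ℕ) : SimpleGraph (Fin k ⊕ Fin k) where
  Adj u v :=
    match u, v with
    | Sum.inl i, Sum.inl j => i ≠ j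
    | Sum.inl j, Sum.inr i => j = i ∨ (j : ℕ) = ((i : ℕ) + 1) % k
    | Sum.inr i, Sum.inl j => j = i ∨ (j : ℕ) = ((i : ℕ) + 1) % k
    | Sum.inr _, Sum.inr _ => False
  symm := by
    constructor
    intro u v h
    cases u <;> cases v <;> simp_all <;> tauto
  loopless := by
    constructor
    intro u
    cases u <;> simp

/-- The shortest-path distance in the `k`-sun graph as a function on
unordered pairs of vertices. -/
noncomputable def sunDist (k : ℕ) : Sym2 (Fin k ⊕ Fin k) → ℕ :=
  Sym2.lift ⟨(sunGraph k).dist, fun _ _ => SimpleGraph.dist_comm⟩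

namespace SunAux

variable {k : ℕ} [NeZero k]

lemma val_add_one (hk : 3 ≤ k) (i : Fin k) : ((i + 1 : Fin k) : ℕ) = ((i : ℕ) + 1) % k := by
  haveI : NeZero k := ⟨by omega⟩
  rw [Fin.val_add, Fin.val_one', Nat.mod_eq_of_lt (show 1 < k by omega)]

lemma adj_inl_inr (hk : 3 ≤ k) (j i : Fin k) :
    (sunGraph k).Adj (Sum.inl j) (Sum.inr i) ↔ j = i ∨ j = i + 1 := by
  show (j = i ∨ (j : ℕ) = ((i : ℕ) + 1) % k) ↔ _
  rw [← val_add_one hk i, Fin.val_eq_val]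

lemma adj_inr_inl (hk : 3 ≤ k) (i j : Fin k) :
    (sunGraph k).Adj (Sum.inr i) (Sum.inl j) ↔ j = i ∨ j = i + 1 := by
  show (j = i ∨ (j : ℕ) = ((i : ℕ) + 1) % k) ↔ _
  rw [← val_add_one hk i, Fin.val_eq_val]

lemma one_ne_zero' (hk : 3 ≤ k) : (1 : Fin k) ≠ 0 := by
  intro h
  have := congrArg Fin.val h
  rw [Fin.val_one', Fin.val_zero, Nat.mod_eq_of_lt (show 1 < k by omega)] at this
  omega

lemma two_ne_zero' (hk : 3 ≤ k) : (1 + 1 : Fin k) ≠ 0 := by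
  intro h
  have := congrArg Fin.val h
  rw [Fin.val_add, Fin.val_one', Fin.val_zero,
    Nat.mod_eq_of_lt (show 1 < k by omega), Nat.mod_eq_of_lt (show 1 + 1 < k by omega)] at this
  omega

lemma distinct (hk : 3 ≤ k) (i : Fin k) : i - 1 ≠ i ∧ i ≠ i + 1 ∧ i - 1 ≠ i + 1 := by
  refine ⟨?_, ?_, ?_⟩
  · intro h
    rw [sub_eq_iff_eq_add] at h
    exact one_ne_zero' hk (left_eq_add.mp h)
  · intro h
    exact one_ne_zero' hk (left_eq_add.mp h)
  · intro h
    rw [sub_eq_iff_eq_add, add_assoc] at h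
    exact two_ne_zero' hk (left_eq_add.mp h)


/-- The condition for two independent vertices to be at distance 3. -/
abbrev cond (i j : Fin k) : Prop := j ≠ i ∧ j ≠ i + 1 ∧ i ≠ j + 1

open SimpleGraph in
lemma dist_inl_inl_le (i j : Fin k) :
    (sunGraph k).dist (Sum.inl i) (Sum.inl j) ≤ 1 := by
  by_cases h : i = j
  · subst h; simp [SimpleGraph.dist_self]
  · simpa using SimpleGraph.dist_le
      (SimpleGraph.Walk.cons (show (sunGraph k).Adj (Sum.inl i) (Sum.inl j) from h)
        SimpleGraph.Walk.nil)

lemma dist_inl_inr_le (hk : 3 ≤ k) (t i : Fin k) :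
    (sunGraph k).dist (Sum.inl t) (Sum.inr i) ≤ 2 := by
  by_cases h : (sunGraph k).Adj (Sum.inl t) (Sum.inr i)
  · have := SimpleGraph.dist_le (SimpleGraph.Walk.cons h SimpleGraph.Walk.nil)
    simp only [SimpleGraph.Walk.length_cons, SimpleGraph.Walk.length_nil] at this
    omega
  · have ht : t ≠ i := by
      intro h'; exact h ((adj_inl_inr hk t i).mpr (Or.inl h'))
    have hle := SimpleGraph.dist_le
      (SimpleGraph.Walk.cons (show (sunGraph k).Adj (Sum.inl t) (Sum.inl i) from ht)
        (SimpleGraph.Walk.cons ((adj_inl_inr hk i i).mpr (Or.inl rfl)) SimpleGraph.Walk.nil))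
    simpa using hle

lemma dist_inr_inr_le (hk : 3 ≤ k) {i j : Fin k} (h : ¬ cond i j) :
    (sunGraph k).dist (Sum.inr i) (Sum.inr j) ≤ 2 := by
  by_cases h1 : j = i
  · subst h1; simp [SimpleGraph.dist_self]
  by_cases h2 : j = i + 1
  · subst h2
    have hle := SimpleGraph.dist_le
      (SimpleGraph.Walk.cons ((adj_inr_inl hk i (i + 1)).mpr (Or.inr rfl))
        ((SimpleGraph.adj_symm _ ((adj_inr_inl hk (i + 1) (i + 1)).mpr (Or.inl rfl))).toWalk))
    simpa using hle
  by_cases h3 : i = j + 1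
  · have hle := SimpleGraph.dist_le
      (SimpleGraph.Walk.cons ((adj_inr_inl hk i i).mpr (Or.inl rfl))
        ((SimpleGraph.adj_symm _ ((adj_inr_inl hk j i).mpr (Or.inr h3))).toWalk))
    simpa using hle
  exact absurd ⟨h1, h2, h3⟩ h

lemma three_le_length (hk : 3 ≤ k) {i j : Fin k} (hc : cond i j)
    (w : (sunGraph k).Walk (Sum.inr i) (Sum.inr j)) : 3 ≤ w.length := by
  cases w with
  | nil => exact absurd rfl hc.1
  | cons h1 w1 =>
    rename_i u
    cases u with
    | inr t => exact h1.elim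
    | inl t =>
      have ht : t = i ∨ t = i + 1 := (adj_inr_inl hk i t).mp h1
      cases w1 with
      | cons h2 w2 =>
        rename_i u'
        cases w2 with
        | nil =>
          have ht' : t = j ∨ t = j + 1 := (adj_inl_inr hk t j).mp h2
          exfalso
          rcases ht with rfl | rfl <;> rcases ht' with h' | h'
          · exact hc.1 h'.symm
          · exact hc.2.2 h'
          · exact hc.2.1 h'.symm
          · exact hc.1 (add_right_cancel h').symm
        | cons h3 w3 =>
          simp only [SimpleGraph.Walk.length_cons]
          omega

lemma dist_inr_inr (hk : 3 ≤ k) {i j : Fin k} (hc : cond i j) :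
    (sunGraph k).dist (Sum.inr i) (Sum.inr j) = 3 := by
  have hij : i ≠ j := fun h => hc.1 h.symm
  let w3 := SimpleGraph.Walk.cons ((adj_inr_inl hk i i).mpr (Or.inl rfl))
    (SimpleGraph.Walk.cons (show (sunGraph k).Adj (Sum.inl i) (Sum.inl j) from hij)
      ((SimpleGraph.adj_symm _ ((adj_inr_inl hk j j).mpr (Or.inl rfl))).toWalk))
  have h1 : (sunGraph k).dist (Sum.inr i) (Sum.inr j) ≤ 3 := by
    have hle := SimpleGraph.dist_le w3
    simpa [w3] using hle
  have h2 : (sunGraph k).dist (Sum.inr i) (Sum.inr j) ≠ 0 :=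
    SimpleGraph.dist_ne_zero_iff_ne_and_reachable.mpr ⟨by simpa using hij, ⟨w3⟩⟩
  obtain ⟨p, hp⟩ := SimpleGraph.exists_walk_of_dist_ne_zero h2
  have := three_le_length hk hc p
  omega

lemma dist_eq_three_iff (hk : 3 ≤ k) (u v : Fin k ⊕ Fin k) :
    (sunGraph k).dist u v = 3 ↔
      ∃ i j, u = Sum.inr i ∧ v = Sum.inr j ∧ cond i j := by
  constructor
  · intro h
    match u, v with
    | Sum.inl i, Sum.inl j => exact absurd h (by have := dist_inl_inl_le (k := k) i j; omega)
    | Sum.inl t, Sum.inr i => exact absurd h (by have := dist_inl_inr_le hk t i; omega)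
    | Sum.inr i, Sum.inl t =>
      exact absurd h (by
        have := dist_inl_inr_le hk t i
        rw [SimpleGraph.dist_comm] at this
        omega)
    | Sum.inr i, Sum.inr j =>
      refine ⟨i, j, rfl, rfl, ?_⟩
      by_contra hnc
      have := dist_inr_inr_le hk hnc
      omega
  · rintro ⟨i, j, rfl, rfl, hc⟩
    exact dist_inr_inr hk hc

lemma count_j (hk : 3 ≤ k) (i : Fin k) :
    (Finset.univ.filter fun j : Fin k => cond i j).card = k - 3 := by
  classical
  have hd := distinct hk i
  have hneg : Finset.univ.filter (fun j : Fin k => ¬ cond i j) = {i, i + 1, i - 1} := by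
    ext j
    have hbr : j = i - 1 ↔ i = j + 1 := by rw [eq_sub_iff_add_eq, eq_comm]
    simp only [Finset.mem_filter, Finset.mem_univ, true_and, Finset.mem_insert,
      Finset.mem_singleton, cond, not_and_or, not_not]
    tauto
  have hcard3 : ({i, i + 1, i - 1} : Finset (Fin k)).card = 3 := by
    rw [Finset.card_insert_of_notMem (by
        simp only [Finset.mem_insert, Finset.mem_singleton, not_or]
        exact ⟨hd.2.1, fun h => hd.1 h.symm⟩),
      Finset.card_insert_of_notMem (by
        simp only [Finset.mem_singleton]
        exact fun h => hd.2.2 h.symm),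
      Finset.card_singleton]
  have := Finset.card_filter_add_card_filter_not
    (s := (Finset.univ : Finset (Fin k))) (p := fun j => cond i j)
  rw [hneg, hcard3, Finset.card_univ, Fintype.card_fin] at this
  omega

lemma T_card (hk : 3 ≤ k) :
    (Finset.univ.filter fun p : (Fin k ⊕ Fin k) × (Fin k ⊕ Fin k) =>
      (sunGraph k).dist p.1 p.2 = 3).card = k * (k - 3) := by
  classical
  have himg : (Finset.univ.filter fun p : (Fin k ⊕ Fin k) × (Fin k ⊕ Fin k) =>
      (sunGraph k).dist p.1 p.2 = 3) =
      (Finset.univ.filter fun p : Fin k × Fin k => cond p.1 p.2).map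
        ⟨fun p => (Sum.inr p.1, Sum.inr p.2), by
          intro a b h
          simpa [Prod.ext_iff] using h⟩ := by
    ext p
    simp only [Finset.mem_filter, Finset.mem_univ, true_and, Finset.mem_map,
      Function.Embedding.coeFn_mk]
    constructor
    · intro h
      obtain ⟨i, j, h1, h2, hc⟩ := (dist_eq_three_iff hk p.1 p.2).mp h
      exact ⟨(i, j), hc, Prod.ext h1.symm h2.symm⟩
    · rintro ⟨⟨i, j⟩, hc, rfl⟩
      exact (dist_eq_three_iff hk _ _).mpr ⟨i, j, rfl, rfl, hc⟩
  rw [himg, Finset.card_map, Finset.card_filter, Fintype.sum_prod_type]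
  have hinner : ∀ i : Fin k, (∑ j : Fin k, if cond i j then 1 else 0) = k - 3 := by
    intro i
    rw [← Finset.card_filter]
    exact count_j hk i
  rw [Finset.sum_congr rfl fun i _ => hinner i, Finset.sum_const, Finset.card_univ,
    Fintype.card_fin, smul_eq_mul]

end SunAux

/-- For `k ≥ 3`, the Wiener polarity index of the `k`-sun graph, i.e. the number
of unordered pairs of vertices at distance exactly `3`, equals `k * (k - 3) / 2`. -/
theorem sunGraph_wienerPolarityIndex (k : ℕ) (hk : 3 ≤ k) :
    (Finset.univ.filter
      (fun e : Sym2 (Fin k ⊕ Fin k) => sunDist k e = 3)).card = k * (k - 3) / 2 := by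
  classical
  haveI : NeZero k := ⟨by omega⟩
  set A := Finset.univ.filter (fun e : Sym2 (Fin k ⊕ Fin k) => sunDist k e = 3) with hA
  set T := Finset.univ.filter (fun p : (Fin k ⊕ Fin k) × (Fin k ⊕ Fin k) =>
    (sunGraph k).dist p.1 p.2 = 3) with hT
  have hmaps : ∀ p ∈ T, Sym2.mk p.1 p.2 ∈ A := by
    rintro ⟨a, b⟩ hp
    simp only [hT, hA, Finset.mem_filter, Finset.mem_univ, true_and] at hp ⊢
    simpa [sunDist] using hp
  have hcard := Finset.card_eq_sum_card_fiberwise hmaps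
  have hfib : ∀ e ∈ A, (T.filter fun p => Sym2.mk p.1 p.2 = e).card = 2 := by
    intro e
    induction e using Sym2.ind with
    | _ a b =>
      intro he
      simp only [hA, Finset.mem_filter, Finset.mem_univ, true_and] at he
      have hab : (sunGraph k).dist a b = 3 := by simpa [sunDist] using he
      obtain ⟨i, j, rfl, rfl, hc⟩ := (SunAux.dist_eq_three_iff hk a b).mp hab
      have hne : (Sum.inr i : Fin k ⊕ Fin k) ≠ Sum.inr j := by
        simpa using fun h => hc.1 h.symm
      have hset : (T.filter fun p => Sym2.mk p.1 p.2 = s(Sum.inr i, Sum.inr j)) =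
          {((Sum.inr i : Fin k ⊕ Fin k), (Sum.inr j : Fin k ⊕ Fin k)),
            (Sum.inr j, Sum.inr i)} := by
        ext ⟨x, y⟩
        simp only [hT, Finset.mem_filter, Finset.mem_univ, true_and, Finset.mem_insert,
          Finset.mem_singleton, Sym2.eq_iff, Prod.mk.injEq]
        constructor
        · rintro ⟨hd, (⟨rfl, rfl⟩ | ⟨rfl, rfl⟩)⟩
          · exact Or.inl ⟨rfl, rfl⟩
          · exact Or.inr ⟨rfl, rfl⟩
        · rintro (⟨rfl, rfl⟩ | ⟨rfl, rfl⟩)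
          · exact ⟨hab, Or.inl ⟨rfl, rfl⟩⟩
          · exact ⟨by rwa [SimpleGraph.dist_comm], Or.inr ⟨rfl, rfl⟩⟩
      rw [hset, Finset.card_insert_of_notMem (by simp [Prod.ext_iff, hne]),
        Finset.card_singleton]
  rw [Finset.sum_congr rfl hfib, Finset.sum_const, smul_eq_mul] at hcard
  have hTc := SunAux.T_card (k := k) hk
  rw [← hT] at hTc
  obtain ⟨m, hm⟩ : ∃ m, k * (k - 3) = m := ⟨_, rfl⟩
  rw [hm] at hTc ⊢
  omega
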